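/- Let W ⊆ ℝ^d be a bounded set such that for some ε > 0 and C > 0 the covering bound N_δ(W) ≤ C δ^{-(d*+ε)} holds for all sufficiently small δ > 0. Then for every α with d*+ε < α, the quantity E_α(MST(W_n)) is uniformly bounded over all finite subsets W_n of W. -/

import Mathlib

open Metric Set Finset

/-- The `α`-weighted total edge length of a graph `G` on a finite point set
`S ⊆ ℝ^d`: the sum of `‖u - v‖^α` over the edges of `G`. -/
noncomputable def treeCost {d : ℕ} (S : Finset (EuclideanSpace ℝ (Fin d)))
    (G : SimpleGraph S) (α : ℝ) : ℝ :=
  letI := Classical.decRel G.Adj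
  ∑ e ∈ G.edgeFinset,
    Sym2.lift ⟨fun (u v : S) => dist (u : EuclideanSpace ℝ (Fin d)) (v : EuclideanSpace ℝ (Fin d)) ^ α,
      fun u v => by simp [dist_comm]⟩ e

/-- `G` is a Euclidean minimum spanning tree on `S`: it is a tree (on vertex set `S`)
of minimal total Euclidean edge length among all trees on `S`. -/
def IsMST {d : ℕ} (S : Finset (EuclideanSpace ℝ (Fin d))) (G : SimpleGraph S) : Prop :=
  G.IsTree ∧ ∀ H : SimpleGraph S, H.IsTree → treeCost S G 1 ≤ treeCost S H 1

/-- Maximal number of pairwise disjoint closed `δ`-balls with centers in `W`. -/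
noncomputable def packingNumber {d : ℕ} (W : Set (EuclideanSpace ℝ (Fin d))) (δ : ℝ) : ℕ :=
  sSup {n : ℕ | ∃ s : Finset (EuclideanSpace ℝ (Fin d)), ↑s ⊆ W ∧ s.card = n ∧
    (s : Set (EuclideanSpace ℝ (Fin d))).Pairwise fun x y =>
      Disjoint (closedBall x δ) (closedBall y δ)}

/-!
Bound the diameter of `W` by `R` and sort the edges of the minimum spanning tree into the dyadic
windows `(r/2, r]`, `r = R 2^(-k)`. Snapping both endpoints of an edge to a maximal
`r/16`-packing of `W` is injective on a window: two distinct tree edges whose endpoints are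
`r/4`-close would violate the cycle property of the minimum spanning tree. The snapped pairs are
at distance at most `2r`, so a volume count bounds the window by `33^d N_{r/16}(W)`, which is
`O(r^(-(d*+ε)))`. The window thus contributes `O(r^(α-(d*+ε)))` to `E_α`, and these form a
convergent geometric series in `k`, independently of the finite set.
-/

open MeasureTheory ENNReal in
theorem card_le_of_pairwise_disjoint_closedBall {E : Type*} [NormedAddCommGroup E]
    [NormedSpace ℝ E] [FiniteDimensional ℝ E] {s : Finset E} {z : E} {ρ δ : ℝ}
    (hδ : 0 < δ) (hρ : 0 ≤ ρ) (hs : ∀ x ∈ s, dist x z ≤ ρ)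
    (hdisj : (s : Set E).Pairwise fun x y => Disjoint (closedBall x δ) (closedBall y δ)) :
    (#s : ℝ) ≤ ((ρ + δ) / δ) ^ Module.finrank ℝ E := by
  borelize E
  set μ : Measure E := Measure.addHaar
  have hunion : (⋃ x ∈ s, closedBall x δ) ⊆ closedBall z (ρ + δ) :=
    iUnion₂_subset fun x hx => closedBall_subset_closedBall' (by linarith [hs x hx])
  have hvol : (#s : ℝ≥0∞) * ENNReal.ofReal (δ ^ Module.finrank ℝ E) * μ (ball 0 1)
      ≤ ENNReal.ofReal ((ρ + δ) ^ Module.finrank ℝ E) * μ (ball 0 1) :=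
    calc (#s : ℝ≥0∞) * ENNReal.ofReal (δ ^ Module.finrank ℝ E) * μ (ball 0 1)
        = μ (⋃ x ∈ s, closedBall x δ) := by
          rw [measure_biUnion_finset hdisj fun x _ => measurableSet_closedBall]
          simp only [μ.addHaar_closedBall _ hδ.le, Finset.sum_const, nsmul_eq_mul, mul_assoc]
      _ ≤ μ (closedBall z (ρ + δ)) := measure_mono hunion
      _ = ENNReal.ofReal ((ρ + δ) ^ Module.finrank ℝ E) * μ (ball 0 1) :=
          μ.addHaar_closedBall _ (by positivity)
  have hvol' := (ENNReal.mul_le_mul_iff_left (measure_ball_pos μ _ one_pos).ne'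
    measure_ball_lt_top.ne).1 hvol
  rw [← ENNReal.ofReal_natCast, ← ENNReal.ofReal_mul (by positivity),
    ENNReal.ofReal_le_ofReal_iff (by positivity)] at hvol'
  rwa [div_pow, le_div_iff₀ (by positivity)]

theorem card_filter_product_dist_le {E : Type*} [NormedAddCommGroup E]
    [NormedSpace ℝ E] [FiniteDimensional ℝ E] {P : Finset E} {ρ δ : ℝ}
    (hδ : 0 < δ) (hρ : 0 ≤ ρ)
    (hdisj : (P : Set E).Pairwise fun x y => Disjoint (closedBall x δ) (closedBall y δ)) :
    (#{q ∈ P ×ˢ P | dist q.1 q.2 ≤ ρ} : ℝ) ≤ #P * ((ρ + δ) / δ) ^ Module.finrank ℝ E := by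
  have hfiber : #{q ∈ P ×ˢ P | dist q.1 q.2 ≤ ρ} = ∑ p ∈ P, #{q ∈ P | dist p q ≤ ρ} := by
    simp only [Finset.card_filter, Finset.sum_product]
  rw [hfiber, Nat.cast_sum, ← nsmul_eq_mul, ← Finset.sum_const]
  refine Finset.sum_le_sum fun p _ => card_le_of_pairwise_disjoint_closedBall (z := p) hδ hρ
    (fun q hq => ?_) (hdisj.mono (Finset.coe_subset.2 (Finset.filter_subset _ _)))
  rw [dist_comm]
  exact (Finset.mem_filter.1 hq).2

section PackingNumber

variable {d : ℕ} {W : Set (EuclideanSpace ℝ (Fin d))} {δ : ℝ}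

theorem bddAbove_packing_cards (hW : Bornology.IsBounded W) (hδ : 0 < δ) :
    BddAbove {n : ℕ | ∃ s : Finset (EuclideanSpace ℝ (Fin d)), ↑s ⊆ W ∧ s.card = n ∧
      (s : Set (EuclideanSpace ℝ (Fin d))).Pairwise fun x y =>
        Disjoint (closedBall x δ) (closedBall y δ)} := by
  obtain ⟨R, hR, hWR⟩ := hW.subset_closedBall_lt 0 0
  refine ⟨⌊((R + δ) / δ) ^ d⌋₊, ?_⟩
  rintro _ ⟨s, hsW, rfl, hs⟩
  refine Nat.le_floor ?_
  simpa using card_le_of_pairwise_disjoint_closedBall (z := 0) hδ hR.le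
    (fun x hx => hWR (hsW hx)) hs

theorem card_le_packingNumber (hW : Bornology.IsBounded W) (hδ : 0 < δ)
    {s : Finset (EuclideanSpace ℝ (Fin d))} (hsW : ↑s ⊆ W)
    (hs : (s : Set (EuclideanSpace ℝ (Fin d))).Pairwise fun x y =>
      Disjoint (closedBall x δ) (closedBall y δ)) :
    #s ≤ packingNumber W δ :=
  le_csSup (bddAbove_packing_cards hW hδ) ⟨s, hsW, rfl, hs⟩

theorem exists_card_eq_packingNumber (hW : Bornology.IsBounded W) (hδ : 0 < δ) :
    ∃ s : Finset (EuclideanSpace ℝ (Fin d)), ↑s ⊆ W ∧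
      (s : Set (EuclideanSpace ℝ (Fin d))).Pairwise
        (fun x y => Disjoint (closedBall x δ) (closedBall y δ)) ∧
      #s = packingNumber W δ := by
  obtain ⟨s, hsW, hcard, hs⟩ :=
    Nat.sSup_mem (by exact ⟨0, ∅, by simp, by simp, by simp⟩) (bddAbove_packing_cards hW hδ)
  exact ⟨s, hsW, hs, hcard⟩

/-- Maximality: a point farther than `2δ` from every centre could be added to the packing. -/
theorem exists_packing_forall_exists_dist_le (hW : Bornology.IsBounded W) (hδ : 0 < δ) :
    ∃ P : Finset (EuclideanSpace ℝ (Fin d)), ↑P ⊆ W ∧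
      (P : Set (EuclideanSpace ℝ (Fin d))).Pairwise
        (fun x y => Disjoint (closedBall x δ) (closedBall y δ)) ∧
      #P = packingNumber W δ ∧ ∀ w ∈ W, ∃ p ∈ P, dist w p ≤ 2 * δ := by
  classical
  obtain ⟨P, hPW, hP, hcard⟩ := exists_card_eq_packingNumber hW hδ
  refine ⟨P, hPW, hP, hcard, fun w hw => ?_⟩
  by_contra! hfar
  have hwP : w ∉ P := fun h => by linarith [hfar w h, dist_self w]
  have hins := card_le_packingNumber hW hδ (s := insert w P)
    (by rw [Finset.coe_insert]; exact Set.insert_subset hw hPW)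
    (by
      rw [Finset.coe_insert]
      refine hP.insert fun p hp _ => ⟨?_, ?_⟩ <;>
        refine closedBall_disjoint_closedBall ?_
      · linarith [hfar p hp]
      · linarith [hfar p hp, dist_comm w p])
  rw [Finset.card_insert_of_notMem hwP, hcard] at hins
  omega

theorem packingNumber_anti (hW : Bornology.IsBounded W) {δ' : ℝ} (hδ' : 0 < δ')
    (h : δ' ≤ δ) : packingNumber W δ ≤ packingNumber W δ' := by
  obtain ⟨P, hPW, hP, hcard⟩ := exists_card_eq_packingNumber hW (hδ'.trans_le h)
  rw [← hcard]
  exact card_le_packingNumber hW hδ' hPW fun x hx y hy hxy => (hP hx hy hxy).mono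
    (closedBall_subset_closedBall h) (closedBall_subset_closedBall h)

end PackingNumber

theorem exists_packingNumber_le_mul_rpow {d : ℕ} {W : Set (EuclideanSpace ℝ (Fin d))}
    (hW : Bornology.IsBounded W) {C σ δ₁ : ℝ} (R : ℝ) (hC : 0 ≤ C) (hδ₁ : 0 < δ₁)
    (h : ∀ δ : ℝ, 0 < δ → δ ≤ δ₁ → (packingNumber W δ : ℝ) ≤ C * δ ^ (-σ)) :
    ∃ C' : ℝ, 0 ≤ C' ∧ ∀ δ : ℝ, 0 < δ → δ ≤ R → (packingNumber W δ : ℝ) ≤ C' * δ ^ (-σ) := by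
  set K := max 1 (R / δ₁) ^ |σ|
  have hK : 1 ≤ K := Real.one_le_rpow (le_max_left _ _) (abs_nonneg σ)
  refine ⟨C * K, by positivity, fun δ hδ hδR => ?_⟩
  rcases le_or_gt δ δ₁ with hle | hlt
  · calc (packingNumber W δ : ℝ) ≤ C * δ ^ (-σ) := h δ hδ hle
      _ ≤ C * K * δ ^ (-σ) := by gcongr; exact le_mul_of_one_le_right hC hK
  · have hratio : (δ / δ₁) ^ σ ≤ K :=
      calc (δ / δ₁) ^ σ ≤ (δ / δ₁) ^ |σ| :=
            Real.rpow_le_rpow_of_exponent_le ((one_le_div hδ₁).2 hlt.le) (le_abs_self σ)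
        _ ≤ K := Real.rpow_le_rpow (by positivity)
              (le_max_of_le_right (by gcongr)) (abs_nonneg σ)
    calc (packingNumber W δ : ℝ) ≤ packingNumber W δ₁ := by
          exact_mod_cast packingNumber_anti hW hδ₁ hlt.le
      _ ≤ C * δ₁ ^ (-σ) := h δ₁ hδ₁ le_rfl
      _ = C * (δ / δ₁) ^ σ * δ ^ (-σ) := by
          rw [Real.div_rpow hδ.le hδ₁.le, Real.rpow_neg hδ.le, Real.rpow_neg hδ₁.le]
          field_simp
      _ ≤ C * K * δ ^ (-σ) := by gcongr

theorem rpow_le_mul_max_of_half_lt {L r α : ℝ} (hL : r / 2 < L) (hLr : L ≤ r) :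
    L ^ α ≤ r ^ α * max 1 (2 ^ (-α)) := by
  have hr : 0 < r := by linarith
  rcases le_or_gt 0 α with hα | hα
  · calc L ^ α ≤ r ^ α := by gcongr; linarith
      _ ≤ r ^ α * max 1 (2 ^ (-α)) := le_mul_of_one_le_right (by positivity) (le_max_left _ _)
  · calc L ^ α ≤ (r / 2) ^ α := Real.rpow_le_rpow_of_nonpos (by positivity) hL.le hα.le
      _ = r ^ α * 2 ^ (-α) := by
          rw [Real.div_rpow hr.le zero_le_two, Real.rpow_neg zero_le_two, div_eq_mul_inv]
      _ ≤ r ^ α * max 1 (2 ^ (-α)) := by gcongr; exact le_max_right _ _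

theorem exists_dyadic_scale {L R : ℝ} (hL : 0 < L) (hLR : L ≤ R) :
    ∃ k : ℕ, R / 2 ^ (k + 1) < L ∧ L ≤ R / 2 ^ k := by
  obtain ⟨k, hk, hk'⟩ := exists_nat_pow_near ((one_le_div hL).2 hLR) one_lt_two
  refine ⟨k, ?_, ?_⟩
  · rw [div_lt_iff₀ hL] at hk'
    rw [div_lt_iff₀ (by positivity)]
    linarith
  · rw [le_div_iff₀ hL] at hk
    rw [le_div_iff₀ (by positivity)]
    linarith

theorem sum_rpow_le_of_forall_mem_window {ι : Type*} {t : Finset ι} {L : ι → ℝ} {r B σ α : ℝ}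
    (hr : 0 < r) (ht : ∀ i ∈ t, r / 2 < L i ∧ L i ≤ r) (hcard : (#t : ℝ) ≤ B * r ^ (-σ)) :
    ∑ i ∈ t, L i ^ α ≤ B * max 1 (2 ^ (-α)) * r ^ (α - σ) := by
  calc ∑ i ∈ t, L i ^ α ≤ #t * (r ^ α * max 1 (2 ^ (-α))) := by
        simpa using Finset.sum_le_card_nsmul t _ _ fun i hi =>
          rpow_le_mul_max_of_half_lt (ht i hi).1 (ht i hi).2
    _ ≤ B * r ^ (-σ) * (r ^ α * max 1 (2 ^ (-α))) := by gcongr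
    _ = B * max 1 (2 ^ (-α)) * r ^ (α - σ) := by
        rw [sub_eq_neg_add, Real.rpow_add hr]
        ring

theorem sum_rpow_le_of_card_le {ι : Type*} (s : Finset ι) (L : ι → ℝ) {R B σ α : ℝ}
    (hR : 0 < R) (hB : 0 ≤ B) (hσα : σ < α) (hL : ∀ i ∈ s, 0 < L i ∧ L i ≤ R)
    (hcount : ∀ r : ℝ, 0 < r → r ≤ R → (#{i ∈ s | r / 2 < L i ∧ L i ≤ r} : ℝ) ≤ B * r ^ (-σ)) :
    ∑ i ∈ s, L i ^ α ≤ B * max 1 (2 ^ (-α)) * R ^ (α - σ) / (1 - 2 ^ (σ - α)) := by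
  classical
  have hscale : ∀ i, ∃ k : ℕ, i ∈ s → R / 2 ^ k / 2 < L i ∧ L i ≤ R / 2 ^ k := fun i => by
    by_cases hi : i ∈ s
    · obtain ⟨k, hk⟩ := exists_dyadic_scale (hL i hi).1 (hL i hi).2
      exact ⟨k, fun _ => by rwa [div_div, ← pow_succ]⟩
    · exact ⟨0, fun h => absurd h hi⟩
  choose k hk using hscale
  set ρ : ℝ := 2 ^ (σ - α)
  set A : ℝ := B * max 1 (2 ^ (-α)) * R ^ (α - σ)
  have hρ : ρ < 1 := Real.rpow_lt_one_of_one_lt_of_neg one_lt_two (by linarith)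
  have hfiber : ∀ j : ℕ, ∑ i ∈ s with k i = j, L i ^ α ≤ A * ρ ^ j := by
    intro j
    have hsub : {i ∈ s | k i = j} ⊆ {i ∈ s | R / 2 ^ j / 2 < L i ∧ L i ≤ R / 2 ^ j} :=
      fun i hi => by
        obtain ⟨his, rfl⟩ := Finset.mem_filter.1 hi
        exact Finset.mem_filter.2 ⟨his, hk i his⟩
    have hscale_pow : (R / 2 ^ j) ^ (α - σ) = R ^ (α - σ) * ρ ^ j := by
      rw [Real.div_rpow hR.le (by positivity), ← Real.rpow_natCast_mul zero_le_two,
        ← Real.rpow_mul_natCast zero_le_two, div_eq_mul_inv, ← Real.rpow_neg zero_le_two]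
      ring_nf
    calc ∑ i ∈ s with k i = j, L i ^ α ≤ B * max 1 (2 ^ (-α)) * (R / 2 ^ j) ^ (α - σ) :=
          sum_rpow_le_of_forall_mem_window (by positivity)
            (fun i hi => (Finset.mem_filter.1 (hsub hi)).2)
            ((Nat.cast_le.2 (Finset.card_le_card hsub)).trans
              (hcount _ (by positivity) (div_le_self hR.le (one_le_pow₀ one_le_two))))
      _ = A * ρ ^ j := by rw [hscale_pow]; ring
  have hmaps : ∀ i ∈ s, k i ∈ Finset.range (s.sup k + 1) := fun i hi =>
    Finset.mem_range.2 (Nat.lt_succ_of_le (Finset.le_sup hi))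
  calc ∑ i ∈ s, L i ^ α
      = ∑ j ∈ Finset.range (s.sup k + 1), ∑ i ∈ s with k i = j, L i ^ α :=
        (Finset.sum_fiberwise_of_maps_to hmaps _).symm
    _ ≤ ∑ j ∈ Finset.range (s.sup k + 1), A * ρ ^ j := Finset.sum_le_sum fun j _ => hfiber j
    _ = A * ∑ j ∈ Finset.range (s.sup k + 1), ρ ^ j := by rw [Finset.mul_sum]
    _ ≤ A * (1 / (1 - ρ)) := by
        refine mul_le_mul_of_nonneg_left ?_ (by positivity)
        rw [Finset.range_eq_Ico]
        simpa using geom_sum_Ico_le_of_lt_one (m := 0) (Real.rpow_nonneg zero_le_two _) hρ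
    _ = A / (1 - ρ) := mul_one_div _ _

namespace SimpleGraph

variable {V : Type*} {G : SimpleGraph V}

theorem Reachable.deleteEdges_or {w u : V} (h : G.Reachable w u) (v : V) :
    (G.deleteEdges {s(u, v)}).Reachable w u ∨ (G.deleteEdges {s(u, v)}).Reachable w v := by
  obtain ⟨p⟩ := h
  generalize ht : u = t at p
  induction p with
  | nil => exact .inl .rfl
  | @cons a b _ hab _ ih =>
    subst ht
    by_cases he : s(a, b) = s(u, v)
    · rcases Sym2.eq_iff.1 he with ⟨rfl, -⟩ | ⟨rfl, -⟩
      · exact .inl .rfl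
      · exact .inr .rfl
    · have hab' : (G.deleteEdges {s(u, v)}).Adj a b := (deleteEdges_adj ..).2 ⟨hab, he⟩
      exact (ih rfl).imp hab'.reachable.trans hab'.reachable.trans

theorem IsTree.not_reachable_deleteEdges (hG : G.IsTree) {u v a b : V} (huv : G.Adj u v)
    (hau : (G.deleteEdges {s(u, v)}).Reachable a u)
    (hbv : (G.deleteEdges {s(u, v)}).Reachable b v) :
    ¬(G.deleteEdges {s(u, v)}).Reachable a b := fun hab =>
  (isAcyclic_iff_forall_adj_isBridge.1 hG.isAcyclic huv) (hau.symm.trans (hab.trans hbv))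

theorem IsTree.deleteEdges_sup_edge (hG : G.IsTree) {u v a b : V} (huv : G.Adj u v)
    (hau : (G.deleteEdges {s(u, v)}).Reachable a u)
    (hbv : (G.deleteEdges {s(u, v)}).Reachable b v) :
    (G.deleteEdges {s(u, v)} ⊔ edge a b).IsTree := by
  have hab := hG.not_reachable_deleteEdges huv hau hbv
  refine ⟨(connected_iff_exists_forall_reachable _).2 ⟨a, fun w => ?_⟩,
    (hG.isAcyclic.anti (deleteEdges_le _)).sup_edge_of_not_reachable hab⟩
  have hba : (edge a b).Adj b a := (edge_adj ..).2 ⟨.inr ⟨rfl, rfl⟩, fun h => hab (h ▸ .rfl)⟩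
  rcases (hG.connected.preconnected u w).symm.deleteEdges_or v with hwu | hwv
  · exact ((hwu.trans hau.symm).mono le_sup_left).symm
  · exact ((hwv.trans hbv.symm).mono le_sup_left |>.trans (hba.reachable.mono le_sup_right)).symm

end SimpleGraph

noncomputable def edgeLength {X : Type*} [PseudoMetricSpace X] : Sym2 X → ℝ :=
  Sym2.lift ⟨dist, dist_comm⟩

@[simp]
theorem edgeLength_mk {X : Type*} [PseudoMetricSpace X] (x y : X) :
    edgeLength s(x, y) = dist x y := rfl

theorem edgeLength_eq_dist_out {X : Type*} [PseudoMetricSpace X] (e : Sym2 X) :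
    edgeLength e = dist e.out.1 e.out.2 :=
  (congrArg edgeLength e.out_eq).symm

section MST

variable {d : ℕ} {S : Finset (EuclideanSpace ℝ (Fin d))} {G : SimpleGraph S}

theorem treeCost_eq_sum (G : SimpleGraph S) (α : ℝ) [Fintype G.edgeSet] :
    treeCost S G α = ∑ e ∈ G.edgeFinset, edgeLength e ^ α := by
  classical
  refine Finset.sum_congr (by ext; simp) fun e _ => ?_
  induction e using Sym2.ind
  rfl

theorem IsMST.dist_le_of_reachable_deleteEdges (hG : IsMST S G) {u v a b : S} (huv : G.Adj u v)
    (hau : (G.deleteEdges {s(u, v)}).Reachable a u)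
    (hbv : (G.deleteEdges {s(u, v)}).Reachable b v) :
    dist u v ≤ dist a b := by
  classical
  have hab := hG.1.not_reachable_deleteEdges huv hau hbv
  have hcost := hG.2 _ (hG.1.deleteEdges_sup_edge huv hau hbv)
  have hdel : (G.deleteEdges {s(u, v)}).edgeFinset = G.edgeFinset.erase s(u, v) := by
    ext e
    simp [and_comm]
  rw [treeCost_eq_sum, treeCost_eq_sum,
    SimpleGraph.edgeFinset_sup_edge _ (fun h => hab h.reachable) (fun h => hab (h ▸ .rfl)),
    Finset.sum_cons, hdel,
    Finset.sum_erase_eq_sub (SimpleGraph.mem_edgeFinset.2 huv)] at hcost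
  simp only [edgeLength_mk, Real.rpow_one] at hcost
  linarith

theorem IsMST.dist_le_max (hG : IsMST S G) {u v x y : S} (huv : G.Adj u v) (hxy : G.Adj x y)
    (hne : s(u, v) ≠ s(x, y)) : dist u v ≤ max (dist u x) (dist v y) := by
  have hxy' : (G.deleteEdges {s(u, v)}).Adj x y :=
    (SimpleGraph.deleteEdges_adj ..).2 ⟨hxy, Ne.symm hne⟩
  rcases (hG.1.connected.preconnected x u).deleteEdges_or v with hxu | hxv
  · refine le_max_of_le_right ?_
    rw [dist_comm v]
    exact hG.dist_le_of_reachable_deleteEdges huv (hxy'.symm.reachable.trans hxu) .rfl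
  · exact le_max_of_le_left (hG.dist_le_of_reachable_deleteEdges huv .rfl hxv)

end MST

theorem IsMST.card_edges_window_le {d : ℕ} {W : Set (EuclideanSpace ℝ (Fin d))}
    {S : Finset (EuclideanSpace ℝ (Fin d))} {G : SimpleGraph S} [Fintype G.edgeSet]
    (hG : IsMST S G) (hW : Bornology.IsBounded W) (hSW : ↑S ⊆ W) {r : ℝ} (hr : 0 < r) :
    #{e ∈ G.edgeFinset | r / 2 < edgeLength e ∧ edgeLength e ≤ r}
      ≤ packingNumber W (r / 16) * 33 ^ d := by
  classical
  have hδ : 0 < r / 16 := by positivity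
  obtain ⟨P, -, hP, hcard, hnet⟩ := exists_packing_forall_exists_dist_le hW hδ
  choose c hcP hc using fun x : S => hnet x (hSW x.2)
  have hclose : ∀ x y : S, c x = c y → dist x y ≤ r / 4 := fun x y hxy => by
    have := dist_triangle_right (x : EuclideanSpace ℝ (Fin d)) y (c x)
    rw [Subtype.dist_eq]
    linarith [hc x, hc y, hxy ▸ hc y]
  set F : Sym2 S → EuclideanSpace ℝ (Fin d) × EuclideanSpace ℝ (Fin d) :=
    fun e => (c e.out.1, c e.out.2)
  have hout : ∀ e : Sym2 S, s(e.out.1, e.out.2) = e := fun e => e.out_eq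
  have hadj : ∀ e ∈ G.edgeFinset, G.Adj e.out.1 e.out.2 := fun e he => by
    rwa [SimpleGraph.mem_edgeFinset, ← hout e] at he
  set E := ({e ∈ G.edgeFinset | r / 2 < edgeLength e ∧ edgeLength e ≤ r} : Finset (Sym2 S))
  have hmaps : ∀ e ∈ E, F e ∈ {q ∈ P ×ˢ P | dist q.1 q.2 ≤ 2 * r} := fun e he => by
    obtain ⟨-, -, hle⟩ := Finset.mem_filter.1 he
    rw [edgeLength_eq_dist_out, Subtype.dist_eq] at hle
    have h₁ := dist_triangle (c e.out.1) e.out.1 (c e.out.2)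
    have h₂ := dist_triangle (e.out.1 : EuclideanSpace ℝ (Fin d)) e.out.2 (c e.out.2)
    simp only [Finset.mem_filter, Finset.mem_product, F]
    refine ⟨⟨hcP _, hcP _⟩, ?_⟩
    linarith [hc e.out.1, hc e.out.2, dist_comm (c e.out.1) (e.out.1 : EuclideanSpace ℝ (Fin d))]
  have hinj : Set.InjOn F E := by
    intro e he e' he' hF
    obtain ⟨he, hlt, -⟩ := Finset.mem_filter.1 he
    by_contra hne
    have hmax := hG.dist_le_max (hadj e he) (hadj e' (Finset.mem_filter.1 he').1)
      (by rwa [hout, hout])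
    rw [edgeLength_eq_dist_out] at hlt
    have := max_le (hclose _ _ (congrArg Prod.fst hF)) (hclose _ _ (congrArg Prod.snd hF))
    linarith
  have hpairs := card_filter_product_dist_le (ρ := 2 * r) hδ (by positivity) hP
  rw [finrank_euclideanSpace_fin, show (2 * r + r / 16) / (r / 16) = 33 by field_simp; norm_num,
    hcard] at hpairs
  exact_mod_cast (Nat.cast_le.2 (Finset.card_le_card_of_injOn F hmaps hinj)).trans hpairs

theorem stmt7_general {d : ℕ} (W : Set (EuclideanSpace ℝ (Fin d))) (hW : Bornology.IsBounded W)
    (dstar ε C : ℝ) (hC : 0 < C)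
    (hcov : ∃ δ₁ > (0:ℝ), ∀ δ : ℝ, 0 < δ → δ ≤ δ₁ →
      (packingNumber W δ : ℝ) ≤ C * δ ^ (-(dstar + ε))) :
    ∀ α : ℝ, dstar + ε < α → ∃ C' : ℝ,
      ∀ S : Finset (EuclideanSpace ℝ (Fin d)), ↑S ⊆ W →
        ∀ G : SimpleGraph S, IsMST S G → treeCost S G α ≤ C' := by
  intro α hα
  obtain ⟨δ₁, hδ₁, hpack⟩ := hcov
  obtain ⟨D, hD⟩ := Metric.isBounded_iff.1 hW
  set R := max D 1
  have hR : 0 < R := lt_max_of_lt_right one_pos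
  obtain ⟨C₁, hC₁, hunif⟩ := exists_packingNumber_le_mul_rpow hW R hC.le hδ₁ hpack
  refine ⟨C₁ * 16 ^ (dstar + ε) * 33 ^ d * max 1 (2 ^ (-α)) * R ^ (α - (dstar + ε)) /
    (1 - 2 ^ (dstar + ε - α)), fun S hSW G hG => ?_⟩
  classical
  rw [treeCost_eq_sum]
  refine sum_rpow_le_of_card_le _ _ hR (by positivity) hα (fun e he => ?_) fun r hr hrR => ?_
  · induction e using Sym2.ind with | h x y =>
    rw [SimpleGraph.mem_edgeFinset, SimpleGraph.mem_edgeSet] at he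
    exact ⟨dist_pos.2 he.ne, (hD (hSW x.2) (hSW y.2)).trans (le_max_left D 1)⟩
  · calc (#{e ∈ G.edgeFinset | r / 2 < edgeLength e ∧ edgeLength e ≤ r} : ℝ)
        ≤ packingNumber W (r / 16) * 33 ^ d := by
          exact_mod_cast hG.card_edges_window_le hW hSW hr
      _ ≤ C₁ * (r / 16) ^ (-(dstar + ε)) * 33 ^ d := by
          gcongr
          exact hunif _ (by positivity) (by linarith)
      _ = C₁ * 16 ^ (dstar + ε) * 33 ^ d * r ^ (-(dstar + ε)) := by
          rw [Real.div_rpow hr.le (by norm_num), Real.rpow_neg (by norm_num : (0:ℝ) ≤ 16)]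
          field_simp

/-- A power-law covering bound `N_δ(W) ≤ C δ^{-(d*+ε)}` implies that for every
`α > d* + ε`, the `α`-weighted MST lengths are uniformly bounded over all finite
subsets of `W`. -/
theorem stmt7 {d : ℕ} (W : Set (EuclideanSpace ℝ (Fin d))) (hW : Bornology.IsBounded W)
    (dstar ε C : ℝ) (hε : 0 < ε) (hC : 0 < C)
    (hcov : ∃ δ₁ > (0:ℝ), ∀ δ : ℝ, 0 < δ → δ ≤ δ₁ →
      (packingNumber W δ : ℝ) ≤ C * δ ^ (-(dstar + ε))) :
    ∀ α : ℝ, dstar + ε < α → ∃ C' : ℝ,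
      ∀ S : Finset (EuclideanSpace ℝ (Fin d)), ↑S ⊆ W →
        ∀ G : SimpleGraph S, IsMST S G → treeCost S G α ≤ C' :=
  stmt7_general W hW dstar ε C hC hcov
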